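/- arXiv:0905.3105 — 2 statements merged into one kernel-verified Lean document; each statement's English description precedes it below -/
import Mathlib

section
/- Suppose the Fourier transform Q̂(ξ) of Q ∈ L^2(ℝ^3) satisfies the bound ‖ |ξ|^n Q̂ ‖_{L^∞} ≤ (C n)^n for all n ≥ 1 and some constant C > 0, and Q̂ ∈ L^1. Then Q is real-analytic on ℝ^3. -/
open MeasureTheory Real Module
open scoped FourierTransform Nat RealInnerProductSpace ENNReal

/-!
Testing the bound at the exponent `n + 4` against the integrable weight `(1 + ‖ξ‖)⁻⁴` gives
`∫ ‖ξ‖ⁿ ‖Q̂ ξ‖ ≤ A + K n! ρⁿ` with `ρ = 2eC`, since `mᵐ ≤ eᵐ m!` and `(n + 4)! ≤ 2ⁿ⁺⁴ 4! n!`.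
The `n`-th Taylor coefficient of `𝓕 Q̂` at `w` is the Fourier transform of
`(-2πi ⟪ξ, ·⟫)ⁿ Q̂ ξ / n!`, of norm at most `(2π)ⁿ / n!` times the `n`-th moment. Expanding
`e^{-2πi ⟪ξ, y⟫}` into its exponential series inside the Fourier integral, the moment bounds
dominate the resulting series, so it can be integrated term by term: `𝓕 Q̂` is the sum of its
Taylor series on a ball of radius `1 / (8πeC)` about every point, and `Q = 𝓕 Q̂ ∘ (-·)`.
-/

theorem Nat.factorial_add_le_two_pow_mul (n k : ℕ) : (n + k)! ≤ 2 ^ (n + k) * k ! * n ! := by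
  rw [← Nat.add_choose_mul_factorial_mul_factorial n k, mul_right_comm]
  gcongr
  exact Nat.choose_le_two_pow _ _

theorem pow_le_exp_mul_factorial (n : ℕ) : (n : ℝ) ^ n ≤ exp n * n ! := by
  have := Real.pow_div_factorial_le_exp (n : ℝ) (Nat.cast_nonneg n) n
  rwa [div_le_iff₀ (by positivity)] at this

theorem mul_add_pow_le_factorial_mul_pow {C : ℝ} (hC : 0 ≤ C) (n k : ℕ) :
    (C * (n + k : ℕ)) ^ (n + k) ≤ k ! * (2 * exp 1 * C) ^ k * (n ! * (2 * exp 1 * C) ^ n) := by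
  have hfact : ((n + k)! : ℝ) ≤ 2 ^ (n + k) * k ! * n ! := by
    exact_mod_cast Nat.factorial_add_le_two_pow_mul n k
  calc (C * (n + k : ℕ)) ^ (n + k) = C ^ (n + k) * ((n + k : ℕ) : ℝ) ^ (n + k) := mul_pow ..
    _ ≤ C ^ (n + k) * (exp 1 ^ (n + k) * (n + k)!) := by
        gcongr
        simpa [← exp_nat_mul] using pow_le_exp_mul_factorial (n + k)
    _ ≤ C ^ (n + k) * (exp 1 ^ (n + k) * (2 ^ (n + k) * k ! * n !)) := by gcongr
    _ = k ! * (2 * exp 1 * C) ^ k * (n ! * (2 * exp 1 * C) ^ n) := by ring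

theorem summable_pow_div_factorial_mul {M : ℕ → ℝ} {A K ρ r : ℝ} (hM0 : ∀ n, 0 ≤ M n)
    (hM : ∀ n, M n ≤ A + K * (n ! * ρ ^ n)) (hr : 0 ≤ r) (hρ : 0 ≤ ρ) (hrρ : r * ρ < 1) :
    Summable (fun n => r ^ n / n ! * M n) := by
  have hbound : Summable (fun n => A * (r ^ n / n !) + K * (r * ρ) ^ n) :=
    ((Real.summable_pow_div_factorial r).mul_left A).add
      ((summable_geometric_of_lt_one (by positivity) hrρ).mul_left K)
  refine hbound.of_nonneg_of_le (fun n => by have := hM0 n; positivity) fun n => ?_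
  calc r ^ n / n ! * M n ≤ r ^ n / n ! * (A + K * (n ! * ρ ^ n)) := by gcongr; exact hM n
    _ = A * (r ^ n / n !) + K * (r * ρ) ^ n := by
        field_simp
        ring

theorem ae_norm_le_of_eLpNorm_top_le {α F : Type*} [MeasurableSpace α] {μ : Measure α}
    [NormedAddCommGroup F] {g : α → F} {M : ℝ} (hM : 0 ≤ M)
    (h : eLpNorm g ⊤ μ ≤ ENNReal.ofReal M) : ∀ᵐ x ∂μ, ‖g x‖ ≤ M := by
  filter_upwards [ae_le_eLpNormEssSup (f := g) (μ := μ)] with x hx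
  rw [← ENNReal.ofReal_le_ofReal_iff hM, ofReal_norm]
  exact hx.trans (by rwa [eLpNorm_exponent_top] at h)

theorem pow_mul_le_add_mul_inv_one_add_pow {t a M : ℝ} (ht : 0 ≤ t) (ha : 0 ≤ a) {n k : ℕ}
    (h : t ^ (n + k) * a ≤ M) : t ^ n * a ≤ a + 2 ^ k * M * ((1 + t) ^ k)⁻¹ := by
  have hM : 0 ≤ M := le_trans (by positivity) h
  rcases le_or_gt t 1 with ht1 | ht1
  · have : t ^ n * a ≤ a := mul_le_of_le_one_left ha (pow_le_one₀ ht ht1)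
    have : 0 ≤ 2 ^ k * M * ((1 + t) ^ k)⁻¹ := by positivity
    linarith
  · have : t ^ n * a ≤ 2 ^ k * M * ((1 + t) ^ k)⁻¹ := by
      rw [← div_eq_mul_inv, le_div_iff₀ (by positivity)]
      calc t ^ n * a * (1 + t) ^ k ≤ t ^ n * a * (2 * t) ^ k := by gcongr; linarith
        _ = 2 ^ k * (t ^ (n + k) * a) := by ring
        _ ≤ 2 ^ k * M := by gcongr
    linarith

section Moments

variable {V E : Type*} [NormedAddCommGroup V] [NormedSpace ℝ V] [FiniteDimensional ℝ V]
  [MeasurableSpace V] [BorelSpace V] {μ : Measure V} [μ.IsAddHaarMeasure]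
  [NormedAddCommGroup E] {f : V → E} {k n : ℕ} {M : ℝ}

theorem integrable_inv_one_add_norm_pow (hk : finrank ℝ V < k) :
    Integrable (fun v : V => ((1 + ‖v‖) ^ k)⁻¹) μ := by
  refine (integrable_one_add_norm (μ := μ) (r := k) (by exact_mod_cast hk)).congr ?_
  filter_upwards with v
  rw [Real.rpow_neg (by positivity), Real.rpow_natCast]

theorem integrable_norm_pow_mul_norm (hf : Integrable f μ) (hk : finrank ℝ V < k)
    (hM : ∀ᵐ v ∂μ, ‖v‖ ^ (n + k) * ‖f v‖ ≤ M) :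
    Integrable (fun v => ‖v‖ ^ n * ‖f v‖) μ :=
  (hf.norm.add ((integrable_inv_one_add_norm_pow hk).const_mul (2 ^ k * M))).mono'
    ((continuous_norm.pow n).aestronglyMeasurable.mul hf.norm.aestronglyMeasurable)
    (hM.mono fun v hv => by
      rw [Real.norm_of_nonneg (by positivity)]
      exact pow_mul_le_add_mul_inv_one_add_pow (norm_nonneg v) (norm_nonneg _) hv)

theorem integral_norm_pow_mul_norm_le (hf : Integrable f μ) (hk : finrank ℝ V < k)
    (hM : ∀ᵐ v ∂μ, ‖v‖ ^ (n + k) * ‖f v‖ ≤ M) :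
    ∫ v, ‖v‖ ^ n * ‖f v‖ ∂μ ≤ ∫ v, ‖f v‖ ∂μ + 2 ^ k * M * ∫ v, ((1 + ‖v‖) ^ k)⁻¹ ∂μ := by
  have hweight := (integrable_inv_one_add_norm_pow (μ := μ) hk).const_mul (2 ^ k * M)
  rw [← integral_const_mul, ← integral_add hf.norm hweight]
  exact integral_mono_ae (integrable_norm_pow_mul_norm hf hk hM) (hf.norm.add hweight)
    (hM.mono fun v hv => pow_mul_le_add_mul_inv_one_add_pow (norm_nonneg v) (norm_nonneg _) hv)

theorem integral_norm_pow_mul_norm_le_factorial_mul_pow (hf : Integrable f μ)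
    (hk : finrank ℝ V < k) {C : ℝ} (hC : 0 ≤ C)
    (hdecay : ∀ᵐ v ∂μ, ‖v‖ ^ (n + k) * ‖f v‖ ≤ (C * (n + k : ℕ)) ^ (n + k)) :
    ∫ v, ‖v‖ ^ n * ‖f v‖ ∂μ ≤ ∫ v, ‖f v‖ ∂μ +
      2 ^ k * (k ! * (2 * exp 1 * C) ^ k) * (∫ v, ((1 + ‖v‖) ^ k)⁻¹ ∂μ) *
        (n ! * (2 * exp 1 * C) ^ n) := by
  have hweight : 0 ≤ ∫ v, ((1 + ‖v‖) ^ k)⁻¹ ∂μ := integral_nonneg fun v => by positivity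
  refine (integral_norm_pow_mul_norm_le hf hk hdecay).trans ?_
  have := mul_add_pow_le_factorial_mul_pow hC n k
  gcongr _ + ?_
  calc 2 ^ k * (C * (n + k : ℕ)) ^ (n + k) * ∫ v, ((1 + ‖v‖) ^ k)⁻¹ ∂μ
      ≤ 2 ^ k * (k ! * (2 * exp 1 * C) ^ k * (n ! * (2 * exp 1 * C) ^ n)) *
          ∫ v, ((1 + ‖v‖) ^ k)⁻¹ ∂μ := by gcongr
    _ = _ := by ring

end Moments

section Fourier

variable {V E : Type*} [NormedAddCommGroup V] [InnerProductSpace ℝ V]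
  [NormedAddCommGroup E] [NormedSpace ℂ E]

theorem hasSum_fourierPowSMulRight_apply (f : V → E) (v w y : V) :
    HasSum (fun n => (n ! : ℝ)⁻¹ • 𝐞 (-⟪v, w⟫) •
      VectorFourier.fourierPowSMulRight (innerSL ℝ) f v n (fun _ => y))
      (𝐞 (-⟪v, w + y⟫) • f v) := by
  have hexp := ((NormedSpace.expSeries_div_hasSum_exp (-(2 * π * Complex.I) * ⟪v, y⟫)).mul_left
    (𝐞 (-⟪v, w⟫) : ℂ)).smul_const (f v)
  convert hexp using 1
  · funext n
    simp only [VectorFourier.fourierPowSMulRight_apply, Finset.prod_const,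
      Finset.card_univ, Fintype.card_fin, Circle.smul_def, ← Complex.coe_smul, smul_smul]
    rw [innerSL_apply_apply]
    congr 1
    push_cast
    ring
  · rw [← Complex.exp_eq_exp_ℂ, Circle.smul_def, Real.fourierChar_apply,
      Real.fourierChar_apply, ← Complex.exp_add]
    congr 2
    push_cast [inner_add_right]
    ring

theorem norm_fourierPowSMulRight_innerSL_le (f : V → E) (v : V) (n : ℕ) :
    ‖VectorFourier.fourierPowSMulRight (innerSL ℝ) f v n‖ ≤ (2 * π) ^ n * (‖v‖ ^ n * ‖f v‖) := by
  have hL : 2 * π * ‖innerSL ℝ (E := V)‖ ≤ 2 * π :=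
    mul_le_of_le_one_right (by positivity) (norm_innerSL_le ℝ)
  calc _ ≤ (2 * π * ‖innerSL ℝ (E := V)‖) ^ n * ‖v‖ ^ n * ‖f v‖ :=
        VectorFourier.norm_fourierPowSMulRight_le _ f v n
    _ ≤ (2 * π) ^ n * ‖v‖ ^ n * ‖f v‖ := by gcongr
    _ = _ := by ring

theorem norm_fourierPowSMulRight_apply_le (f : V → E) (v y : V) (n : ℕ) :
    ‖VectorFourier.fourierPowSMulRight (innerSL ℝ) f v n (fun _ => y)‖ ≤
      (2 * π * ‖y‖) ^ n * (‖v‖ ^ n * ‖f v‖) :=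
  calc _ ≤ ‖VectorFourier.fourierPowSMulRight (innerSL ℝ) f v n‖ * ∏ _ : Fin n, ‖y‖ :=
        ContinuousMultilinearMap.le_opNorm _ _
    _ ≤ (2 * π) ^ n * (‖v‖ ^ n * ‖f v‖) * ‖y‖ ^ n := by
        rw [Finset.prod_const, Finset.card_univ, Fintype.card_fin]
        gcongr
        exact norm_fourierPowSMulRight_innerSL_le f v n
    _ = (2 * π * ‖y‖) ^ n * (‖v‖ ^ n * ‖f v‖) := by ring

variable [FiniteDimensional ℝ V] [MeasurableSpace V] [BorelSpace V]

/-- `n!⁻¹` times the `n`-th derivative of `𝓕 f` at `w`, as in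
`VectorFourier.hasFTaylorSeriesUpTo_fourierIntegral`. -/
noncomputable def fourierTaylorSeries (f : V → E) (w : V) : FormalMultilinearSeries ℝ V E :=
  fun n => (n ! : ℝ)⁻¹ • 𝓕 (fun v => VectorFourier.fourierPowSMulRight (innerSL ℝ) f v n) w

variable {f : V → E}

theorem norm_fourierTaylorSeries_le {n : ℕ} (hf : Integrable (fun v => ‖v‖ ^ n * ‖f v‖))
    (w : V) : ‖fourierTaylorSeries f w n‖ ≤ (2 * π) ^ n / n ! * ∫ v, ‖v‖ ^ n * ‖f v‖ :=
  calc ‖fourierTaylorSeries f w n‖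
      = (n ! : ℝ)⁻¹ * ‖𝓕 (fun v => VectorFourier.fourierPowSMulRight (innerSL ℝ) f v n) w‖ := by
        rw [fourierTaylorSeries, norm_smul, norm_inv, RCLike.norm_natCast]
    _ ≤ (n ! : ℝ)⁻¹ * ∫ v, ‖VectorFourier.fourierPowSMulRight (innerSL ℝ) f v n‖ := by
        gcongr
        exact VectorFourier.norm_fourierIntegral_le_integral_norm _ _ _ _ _
    _ ≤ (n ! : ℝ)⁻¹ * ∫ v, (2 * π) ^ n * (‖v‖ ^ n * ‖f v‖) :=
        mul_le_mul_of_nonneg_left (integral_mono_of_nonneg (.of_forall fun v => by positivity)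
          (hf.const_mul _) (.of_forall fun v => norm_fourierPowSMulRight_innerSL_le f v n))
          (by positivity)
    _ = _ := by rw [integral_const_mul]; ring

theorem integrable_fourierPowSMulRight_apply (hf : AEStronglyMeasurable f) {n : ℕ}
    (hmom : Integrable (fun v => ‖v‖ ^ n * ‖f v‖)) (y : V) :
    Integrable (fun v => VectorFourier.fourierPowSMulRight (innerSL ℝ) f v n (fun _ => y)) :=
  (ContinuousMultilinearMap.apply ℝ (fun _ : Fin n => V) E fun _ => y).integrable_comp
    (VectorFourier.integrable_fourierPowSMulRight _ hmom hf)

theorem fourierTaylorSeries_apply_eq_integral (hf : AEStronglyMeasurable f) {n : ℕ}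
    (hmom : Integrable (fun v => ‖v‖ ^ n * ‖f v‖)) (w y : V) :
    fourierTaylorSeries f w n (fun _ => y) = ∫ v, (n ! : ℝ)⁻¹ • 𝐞 (-⟪v, w⟫) •
      VectorFourier.fourierPowSMulRight (innerSL ℝ) f v n (fun _ => y) := by
  rw [fourierTaylorSeries, smul_apply,
    Real.fourier_continuousMultilinearMap_apply
      (VectorFourier.integrable_fourierPowSMulRight _ hmom hf), Real.fourier_eq, integral_smul]

theorem hasFPowerSeriesOnBall_fourier [CompleteSpace E] (hf : AEStronglyMeasurable f)
    (hmom : ∀ n, Integrable (fun v => ‖v‖ ^ n * ‖f v‖)) {r : ℝ} (hr : 0 < r)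
    (hsum : Summable (fun n => r ^ n / n ! * ∫ v, ‖v‖ ^ n * ‖f v‖)) (w : V) :
    HasFPowerSeriesOnBall (𝓕 f) (fourierTaylorSeries f w) w (ENNReal.ofReal (r / (2 * π))) := by
  set ρ := r / (2 * π)
  have hρ : 0 < ρ := by positivity
  have hmajorant : ∀ {s : ℝ}, 0 ≤ s → s ≤ ρ → ∀ n : ℕ,
      (2 * π * s) ^ n / n ! * ∫ v, ‖v‖ ^ n * ‖f v‖ ≤ r ^ n / n ! * ∫ v, ‖v‖ ^ n * ‖f v‖ := by
    intro s hs hsρ n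
    have : 2 * π * s ≤ r := by rwa [le_div_iff₀' (by positivity)] at hsρ
    have : 0 ≤ ∫ v, ‖v‖ ^ n * ‖f v‖ := integral_nonneg fun v => by positivity
    gcongr
  clear_value ρ
  refine ⟨?_, ENNReal.ofReal_pos.2 hρ, fun {y} hy => ?_⟩
  · refine (fourierTaylorSeries f w).le_radius_of_summable
      (hsum.of_nonneg_of_le (fun n => by positivity) fun n => ?_)
    rw [Real.coe_toNNReal _ hρ.le]
    calc ‖fourierTaylorSeries f w n‖ * ρ ^ n
        ≤ (2 * π) ^ n / n ! * (∫ v, ‖v‖ ^ n * ‖f v‖) * ρ ^ n := by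
          gcongr; exact norm_fourierTaylorSeries_le (hmom n) w
      _ = (2 * π * ρ) ^ n / n ! * ∫ v, ‖v‖ ^ n * ‖f v‖ := by ring
      _ ≤ _ := hmajorant hρ.le le_rfl n
  have hy : ‖y‖ < ρ := by simpa [ENNReal.ofReal_lt_ofReal_iff hρ, ← ofReal_norm] using hy
  let term : ℕ → V → E := fun n v => (n ! : ℝ)⁻¹ • 𝐞 (-⟪v, w⟫) •
    VectorFourier.fourierPowSMulRight (innerSL ℝ) f v n (fun _ => y)
  have hterm_int : ∀ n, Integrable (term n) := fun n =>
    ((Real.fourierIntegral_convergent_iff w).2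
      (integrable_fourierPowSMulRight_apply hf (hmom n) y)).smul _
  have hterm_norm : ∀ n, ∫ v, ‖term n v‖ ≤ r ^ n / n ! * ∫ v, ‖v‖ ^ n * ‖f v‖ := by
    intro n
    refine le_trans ?_ (hmajorant (norm_nonneg y) hy.le n)
    rw [← integral_const_mul]
    refine integral_mono (hterm_int n).norm ((hmom n).const_mul _) fun v => ?_
    simp only [term, norm_smul, Circle.norm_smul, norm_inv, RCLike.norm_natCast]
    rw [div_eq_inv_mul, mul_assoc]
    gcongr
    exact norm_fourierPowSMulRight_apply_le f v y n
  have hsum_term := hasSum_integral_of_summable_integral_norm hterm_int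
    (hsum.of_nonneg_of_le (fun n => integral_nonneg fun v => norm_nonneg _) hterm_norm)
  convert hsum_term using 1
  · funext n
    exact fourierTaylorSeries_apply_eq_integral hf (hmom n) w y
  · rw [Real.fourier_eq]
    exact integral_congr_ae (.of_forall fun v =>
      ((hasSum_fourierPowSMulRight_apply f v w y).tsum_eq).symm)

theorem analyticOnNhd_fourierInv [CompleteSpace E] (hf : AEStronglyMeasurable f)
    (hmom : ∀ n, Integrable (fun v => ‖v‖ ^ n * ‖f v‖)) {r : ℝ} (hr : 0 < r)
    (hsum : Summable (fun n => r ^ n / n ! * ∫ v, ‖v‖ ^ n * ‖f v‖)) :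
    AnalyticOnNhd ℝ (𝓕⁻ f) Set.univ := fun x _ => by
  have hfourier := (hasFPowerSeriesOnBall_fourier hf hmom hr hsum (-x)).analyticAt
  rw [show 𝓕⁻ f = 𝓕 f ∘ Neg.neg from funext (Real.fourierInv_eq_fourier_neg f)]
  exact hfourier.comp analyticAt_id.neg

end Fourier

theorem analytic_of_fourier_bounds_general
    (Q Qhat : EuclideanSpace ℝ (Fin 3) → ℂ) (C : ℝ) (hC : 0 < C)
    (hQhat1 : Integrable Qhat)
    (hQdef : ∀ x, Q x = 𝓕⁻ Qhat x)
    (hbound : ∀ n : ℕ, 1 ≤ n →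
      eLpNorm (fun ξ : EuclideanSpace ℝ (Fin 3) => ‖ξ‖ ^ n * Qhat ξ) ⊤ volume
        ≤ ENNReal.ofReal ((C * n) ^ n)) :
    AnalyticOnNhd ℝ Q Set.univ := by
  have hk : finrank ℝ (EuclideanSpace ℝ (Fin 3)) < 4 := by simp
  have hdecay : ∀ n : ℕ, ∀ᵐ ξ, ‖ξ‖ ^ (n + 4) * ‖Qhat ξ‖ ≤ (C * (n + 4 : ℕ)) ^ (n + 4) :=
    fun n => (ae_norm_le_of_eLpNorm_top_le (by positivity) (hbound (n + 4) (by omega))).mono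
      fun ξ h => by simpa using h
  have hsum := summable_pow_div_factorial_mul (fun n => integral_nonneg fun ξ => by positivity)
    (fun n => integral_norm_pow_mul_norm_le_factorial_mul_pow hQhat1 hk hC.le (hdecay n))
    (r := (4 * exp 1 * C)⁻¹) (by positivity) (by positivity) (by field_simp; norm_num)
  rw [show Q = 𝓕⁻ Qhat from funext hQdef]
  exact analyticOnNhd_fourierInv hQhat1.1
    (fun n => integrable_norm_pow_mul_norm hQhat1 hk (hdecay n)) (by positivity) hsum

/-- Sub-factorial growth of `|ξ|ⁿ Q̂` in L^∞, together with `Q̂ ∈ L¹`, forces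
`Q = 𝓕⁻ Q̂` to be real-analytic on all of ℝ³. -/
theorem analytic_of_fourier_bounds
    (Q Qhat : EuclideanSpace ℝ (Fin 3) → ℂ) (C : ℝ) (hC : 0 < C)
    (hQ2 : MemLp Q 2 volume)
    (hQhat1 : Integrable Qhat)
    (hQdef : ∀ x, Q x = 𝓕⁻ Qhat x)
    (hbound : ∀ n : ℕ, 1 ≤ n →
      eLpNorm (fun ξ : EuclideanSpace ℝ (Fin 3) => ‖ξ‖ ^ n * Qhat ξ) ⊤ volume
        ≤ ENNReal.ofReal ((C * n) ^ n)) :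
    AnalyticOnNhd ℝ Q Set.univ :=
  analytic_of_fourier_bounds_general Q Qhat C hC hQhat1 hQdef hbound
end

section
/- (Convolution of symmetric decreasing functions) If f, g : ℝ^3 → [0,∞) are radial, non-increasing as functions of |x|, integrable, and at least one is strictly decreasing, then f ∗ g is radial and non-increasing in |x|; if moreover f > 0 and g is strictly decreasing, f ∗ g is strictly decreasing in |x|. -/
/-!
Let `‖x‖ ≤ ‖y‖` and let `σ` be the reflection in the perpendicular bisector of `x` and `y`. It
preserves volume, swaps `x` and `y`, and pushes the half-space on the side of `x` (which contains
the origin) away from the origin. Hence `D z = f (x - z) - f (y - z)` satisfies `D ∘ σ = -D`, and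
`2 ((f ∗ g) x - (f ∗ g) y) = ∫ D z * (g z - g (σ z)) dz`, whose integrand is nonnegative because
both factors change sign together across the bisector. For strict monotonicity, a positive
integrable radially non-increasing `f` must drop strictly across some annulus of width
`‖y - x‖ / 2`; this makes the integrand positive on a nonempty open set.
-/

open MeasureTheory Metric Set
open scoped RealInnerProductSpace

section Reflection

variable {E : Type*} [NormedAddCommGroup E] [InnerProductSpace ℝ E]

/-- Built as a linear reflection followed by a translation so that it is visibly an isometry
(hence volume preserving); it is the identity when `x = y`. -/
noncomputable def perpBisectorReflection (x y : E) : E ≃ᵢ E :=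
  (ℝ ∙ (y - x))ᗮ.reflection.toIsometryEquiv.trans
    (IsometryEquiv.addRight (((‖y‖ ^ 2 - ‖x‖ ^ 2) / ‖y - x‖ ^ 2) • (y - x)))

theorem perpBisectorReflection_apply (x y z : E) :
    perpBisectorReflection x y z =
      z + ((‖y - z‖ ^ 2 - ‖x - z‖ ^ 2) / ‖y - x‖ ^ 2) • (y - x) := by
  have hy : y - z = (x - z) + (y - x) := by abel
  have hy0 : y = x + (y - x) := by abel
  simp only [perpBisectorReflection, IsometryEquiv.trans_apply, IsometryEquiv.addRight_apply,
    LinearIsometryEquiv.coe_toIsometryEquiv, Submodule.reflection_orthogonal_apply,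
    Submodule.reflection_singleton_apply]
  rw [hy, norm_add_sq_real, hy0, norm_add_sq_real, ← hy0]
  simp only [inner_sub_left, real_inner_comm z]
  module

theorem norm_sub_perpBisectorReflection_sq (x y p z : E) :
    ‖p - perpBisectorReflection x y z‖ ^ 2 = ‖p - z‖ ^ 2 +
      (‖y - z‖ ^ 2 - ‖x - z‖ ^ 2) * (‖y - p‖ ^ 2 - ‖x - p‖ ^ 2) / ‖y - x‖ ^ 2 := by
  rcases eq_or_ne x y with rfl | hxy
  · simp [perpBisectorReflection_apply]
  have hn : ‖y - x‖ ≠ 0 := norm_ne_zero_iff.2 (sub_ne_zero.2 hxy.symm)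
  have hyz : y - z = (x - z) + (y - x) := by abel
  have hyp : y - p = (x - p) + (y - x) := by abel
  have hxz : x - z = (x - p) + (p - z) := by abel
  rw [perpBisectorReflection_apply, sub_add_eq_sub_sub, norm_sub_sq_real, hyz, hyp,
    norm_add_sq_real, norm_add_sq_real, hxz, norm_add_sq_real]
  simp only [inner_add_left, real_inner_smul_right, norm_smul, mul_pow, Real.norm_eq_abs, sq_abs]
  field_simp
  ring

theorem norm_left_sub_perpBisectorReflection (x y z : E) :
    ‖x - perpBisectorReflection x y z‖ = ‖y - z‖ := by
  rcases eq_or_ne x y with rfl | hxy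
  · simp [perpBisectorReflection_apply]
  have hn : ‖y - x‖ ≠ 0 := norm_ne_zero_iff.2 (sub_ne_zero.2 hxy.symm)
  have h := norm_sub_perpBisectorReflection_sq x y x z
  rw [sub_self, norm_zero, zero_pow two_ne_zero, sub_zero, mul_div_assoc,
    div_self (pow_ne_zero 2 hn), mul_one] at h
  exact (sq_eq_sq₀ (norm_nonneg _) (norm_nonneg _)).1 (by linarith)

theorem norm_right_sub_perpBisectorReflection (x y z : E) :
    ‖y - perpBisectorReflection x y z‖ = ‖x - z‖ := by
  rcases eq_or_ne x y with rfl | hxy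
  · simp [perpBisectorReflection_apply]
  have hn : ‖y - x‖ ≠ 0 := norm_ne_zero_iff.2 (sub_ne_zero.2 hxy.symm)
  have h := norm_sub_perpBisectorReflection_sq x y y z
  rw [sub_self, norm_zero, ← norm_neg (x - y), neg_sub, zero_pow two_ne_zero, zero_sub,
    mul_neg, neg_div, mul_div_assoc, div_self (pow_ne_zero 2 hn), mul_one] at h
  exact (sq_eq_sq₀ (norm_nonneg _) (norm_nonneg _)).1 (by linarith)

theorem norm_perpBisectorReflection_sq (x y z : E) :
    ‖perpBisectorReflection x y z‖ ^ 2 = ‖z‖ ^ 2 +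
      (‖y - z‖ ^ 2 - ‖x - z‖ ^ 2) * (‖y‖ ^ 2 - ‖x‖ ^ 2) / ‖y - x‖ ^ 2 := by
  simpa using norm_sub_perpBisectorReflection_sq x y 0 z

variable {x y : E}

theorem norm_le_norm_perpBisectorReflection (hxy : ‖x‖ ≤ ‖y‖) {z : E}
    (hz : ‖x - z‖ ≤ ‖y - z‖) : ‖z‖ ≤ ‖perpBisectorReflection x y z‖ := by
  refine (sq_le_sq₀ (norm_nonneg _) (norm_nonneg _)).1 ?_
  rw [norm_perpBisectorReflection_sq]
  have hz' := pow_le_pow_left₀ (norm_nonneg _) hz 2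
  have hxy' := pow_le_pow_left₀ (norm_nonneg _) hxy 2
  have : 0 ≤ (‖y - z‖ ^ 2 - ‖x - z‖ ^ 2) * (‖y‖ ^ 2 - ‖x‖ ^ 2) / ‖y - x‖ ^ 2 := by
    apply div_nonneg (mul_nonneg _ _) (sq_nonneg _) <;> linarith
  linarith

theorem norm_perpBisectorReflection_le_norm (hxy : ‖x‖ ≤ ‖y‖) {z : E}
    (hz : ‖y - z‖ ≤ ‖x - z‖) : ‖perpBisectorReflection x y z‖ ≤ ‖z‖ := by
  refine (sq_le_sq₀ (norm_nonneg _) (norm_nonneg _)).1 ?_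
  rw [norm_perpBisectorReflection_sq]
  have hz' := pow_le_pow_left₀ (norm_nonneg _) hz 2
  have hxy' := pow_le_pow_left₀ (norm_nonneg _) hxy 2
  have : (‖y - z‖ ^ 2 - ‖x - z‖ ^ 2) * (‖y‖ ^ 2 - ‖x‖ ^ 2) / ‖y - x‖ ^ 2 ≤ 0 := by
    apply div_nonpos_of_nonpos_of_nonneg (mul_nonpos_of_nonpos_of_nonneg _ _) (sq_nonneg _) <;>
      linarith
  linarith

theorem norm_lt_norm_perpBisectorReflection (hxy : ‖x‖ < ‖y‖) {z : E}
    (hz : ‖x - z‖ < ‖y - z‖) : ‖z‖ < ‖perpBisectorReflection x y z‖ := by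
  refine (sq_lt_sq₀ (norm_nonneg _) (norm_nonneg _)).1 ?_
  rw [norm_perpBisectorReflection_sq]
  have hz' := pow_lt_pow_left₀ hz (norm_nonneg _) two_ne_zero
  have hxy' := pow_lt_pow_left₀ hxy (norm_nonneg _) two_ne_zero
  have hn : 0 < ‖y - x‖ := norm_pos_iff.2 (sub_ne_zero.2 (ne_of_apply_ne norm hxy.ne'))
  have : 0 < (‖y - z‖ ^ 2 - ‖x - z‖ ^ 2) * (‖y‖ ^ 2 - ‖x‖ ^ 2) / ‖y - x‖ ^ 2 := by
    apply div_pos (mul_pos _ _) (by positivity) <;> linarith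
  linarith

theorem measurePreserving_perpBisectorReflection [FiniteDimensional ℝ E] [MeasurableSpace E]
    [BorelSpace E] (x y : E) : MeasurePreserving (perpBisectorReflection x y) :=
  (measurePreserving_add_right volume _).comp (LinearIsometryEquiv.measurePreserving _)

end Reflection

section Antisymmetrization

variable {α : Type*} [MeasurableSpace α] {μ : Measure α} {T : α → α} {D g : α → ℝ}

theorem integrable_mul_comp_of_comp_eq_neg (hT : MeasurePreserving T μ μ)
    (hTe : MeasurableEmbedding T) (hD : ∀ z, D (T z) = -D z)
    (hDg : Integrable (fun z => D z * g z) μ) : Integrable (fun z => D z * g (T z)) μ := by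
  have h := ((hT.integrable_comp_emb hTe).2 hDg).neg
  refine h.congr (Filter.Eventually.of_forall fun z => ?_)
  simp [hD]

theorem integral_mul_sub_comp_of_comp_eq_neg (hT : MeasurePreserving T μ μ)
    (hTe : MeasurableEmbedding T) (hD : ∀ z, D (T z) = -D z)
    (hDg : Integrable (fun z => D z * g z) μ) :
    ∫ z, D z * (g z - g (T z)) ∂μ = 2 * ∫ z, D z * g z ∂μ := by
  have hcomp : ∫ z, D z * g (T z) ∂μ = -∫ z, D z * g z ∂μ := by
    rw [← hT.integral_comp hTe (fun z => D z * g z), ← integral_neg]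
    simp [hD]
  simp only [mul_sub]
  rw [integral_sub hDg (integrable_mul_comp_of_comp_eq_neg hT hTe hD hDg), hcomp]
  ring

end Antisymmetrization

theorem exists_add_lt_of_antitoneOn {φ : ℝ → ℝ} {s t δ : ℝ} (hφ : AntitoneOn φ (Ici s))
    (hst : s ≤ t) (hlt : φ t < φ s) (hδ : 0 < δ) : ∃ a, s ≤ a ∧ φ (a + δ) < φ a := by
  by_contra! h
  have hstep (k : ℕ) : φ s ≤ φ (s + k * δ) := by
    induction k with
    | zero => simp
    | succ k ih =>
      refine ih.trans ?_
      have := h (s + k * δ) (le_add_of_nonneg_right (by positivity))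
      simpa [add_mul, add_assoc] using this
  obtain ⟨k, hk⟩ := exists_nat_ge ((t - s) / δ)
  have hkt : t ≤ s + k * δ := by rw [div_le_iff₀ hδ] at hk; linarith
  have := hφ hst (hst.trans hkt) hkt
  linarith [hstep k]

theorem MeasureTheory.Integrable.exists_le_norm_and_norm_lt {E F : Type*} [NormedAddCommGroup E]
    [NormedSpace ℝ E] [FiniteDimensional ℝ E] [Nontrivial E] [MeasurableSpace E] [BorelSpace E]
    [NormedAddCommGroup F] {μ : Measure E} [μ.IsAddHaarMeasure] {f : E → F}
    (hf : Integrable f μ) {v : ℝ} (hv : 0 < v) (R : ℝ) : ∃ z, R ≤ ‖z‖ ∧ ‖f z‖ < v := by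
  by_contra! h
  have hfar : μ (ball 0 R)ᶜ < ⊤ := by
    refine (measure_mono fun z hz => ?_).trans_lt (hf.measure_norm_ge_lt_top hv)
    exact h z (by simpa using hz)
  have huniv := measure_univ_of_isAddLeftInvariant μ
  rw [← measure_add_measure_compl measurableSet_ball] at huniv
  exact (ENNReal.add_lt_top.2 ⟨measure_ball_lt_top, hfar⟩).ne huniv

section RadiallyAntitone

variable {E : Type*} [NormedAddCommGroup E] {f : E → ℝ}

theorem eq_of_norm_eq_of_antitone (hf : ∀ u v : E, ‖u‖ ≤ ‖v‖ → f v ≤ f u) {u v : E}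
    (huv : ‖u‖ = ‖v‖) : f u = f v :=
  le_antisymm (hf _ _ huv.ge) (hf _ _ huv.le)

theorem norm_le_apply_zero_of_antitone (hf0 : ∀ z, 0 ≤ f z)
    (hf : ∀ u v : E, ‖u‖ ≤ ‖v‖ → f v ≤ f u) (z : E) : ‖f z‖ ≤ f 0 := by
  rw [Real.norm_of_nonneg (hf0 z)]
  exact hf 0 z (by simp)

theorem MeasureTheory.Integrable.exists_lt_across_annulus [NormedSpace ℝ E]
    [FiniteDimensional ℝ E] [Nontrivial E] [MeasurableSpace E] [BorelSpace E] {μ : Measure E}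
    [μ.IsAddHaarMeasure]
    (hfint : Integrable f μ) (hfpos : ∀ z, 0 < f z) (hf : ∀ u v : E, ‖u‖ ≤ ‖v‖ → f v ≤ f u)
    {δ : ℝ} (hδ : 0 < δ) : ∃ a, δ ≤ a ∧ ∀ u v : E, ‖u‖ ≤ a → a + δ ≤ ‖v‖ → f v < f u := by
  obtain ⟨e, he⟩ := exists_norm_eq E zero_le_one
  have hnorm {r : ℝ} (hr : 0 ≤ r) : ‖r • e‖ = r := by
    rw [norm_smul, he, mul_one, Real.norm_of_nonneg hr]
  have hφ : AntitoneOn (fun r : ℝ => f (r • e)) (Ici δ) := fun r hr s hs hrs =>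
    hf _ _ (by rw [hnorm (hδ.le.trans hr), hnorm (hδ.le.trans hs)]; exact hrs)
  obtain ⟨z, hz, hfz⟩ := hfint.exists_le_norm_and_norm_lt (hfpos (δ • e)) δ
  have hfz' : f (‖z‖ • e) < f (δ • e) := by
    rw [← eq_of_norm_eq_of_antitone hf (hnorm (norm_nonneg z)).symm]
    exact (le_abs_self _).trans_lt hfz
  obtain ⟨a, ha, hlt⟩ := exists_add_lt_of_antitoneOn hφ hz hfz' hδ
  have ha0 : 0 ≤ a := hδ.le.trans ha
  refine ⟨a, ha, fun u v hu hv => ?_⟩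
  calc f v ≤ f ((a + δ) • e) := hf _ _ (by rwa [hnorm (by linarith)])
    _ < f (a • e) := hlt
    _ ≤ f u := hf _ _ (by rwa [hnorm ha0])

theorem exists_norm_sub_eq_and_norm_sub_eq_add [NormedSpace ℝ E] {x y : E} (hxy : x ≠ y)
    {r : ℝ} (hr : 0 ≤ r) :
    ∃ z, ‖x - z‖ = r ∧ ‖y - z‖ = ‖y - x‖ + r := by
  have hn : 0 < ‖y - x‖ := norm_pos_iff.2 (sub_ne_zero.2 hxy.symm)
  refine ⟨x - (r / ‖y - x‖) • (y - x), ?_, ?_⟩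
  · rw [sub_sub_cancel, norm_smul, Real.norm_of_nonneg (by positivity), div_mul_cancel₀ _ hn.ne']
  · have : y - (x - (r / ‖y - x‖) • (y - x)) = (1 + r / ‖y - x‖) • (y - x) := by module
    rw [this, norm_smul, Real.norm_of_nonneg (by positivity), add_mul, one_mul,
      div_mul_cancel₀ _ hn.ne']

end RadiallyAntitone

theorem integrable_comp_sub_mul {G : Type*} [AddGroup G] [MeasurableSpace G]
    [MeasurableAdd G] [MeasurableNeg G] {μ : Measure G} [μ.IsAddLeftInvariant] [μ.IsNegInvariant]
    {f g : G → ℝ} (hf : AEStronglyMeasurable f μ) {C : ℝ} (hC : ∀ z, ‖f z‖ ≤ C)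
    (hg : Integrable g μ) (a : G) : Integrable (fun z => f (a - z) * g z) μ :=
  hg.bdd_mul (hf.comp_quasiMeasurePreserving
    (Measure.measurePreserving_sub_left μ a).quasiMeasurePreserving)
    (Filter.Eventually.of_forall fun z => hC (a - z))

section Convolution

variable {E : Type*} [NormedAddCommGroup E] [InnerProductSpace ℝ E] {f g : E → ℝ}

theorem sub_comp_perpBisectorReflection (hf : ∀ u v : E, ‖u‖ ≤ ‖v‖ → f v ≤ f u) (x y z : E) :
    f (x - perpBisectorReflection x y z) - f (y - perpBisectorReflection x y z) =
      -(f (x - z) - f (y - z)) := by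
  rw [eq_of_norm_eq_of_antitone hf (norm_left_sub_perpBisectorReflection x y z),
    eq_of_norm_eq_of_antitone hf (norm_right_sub_perpBisectorReflection x y z), neg_sub]

theorem mul_sub_comp_perpBisectorReflection_nonneg (hf : ∀ u v : E, ‖u‖ ≤ ‖v‖ → f v ≤ f u)
    (hg : ∀ u v : E, ‖u‖ ≤ ‖v‖ → g v ≤ g u) {x y : E} (hxy : ‖x‖ ≤ ‖y‖) (z : E) :
    0 ≤ (f (x - z) - f (y - z)) * (g z - g (perpBisectorReflection x y z)) := by
  rcases le_total ‖x - z‖ ‖y - z‖ with hz | hz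
  · exact mul_nonneg (sub_nonneg.2 (hf _ _ hz))
      (sub_nonneg.2 (hg _ _ (norm_le_norm_perpBisectorReflection hxy hz)))
  · exact mul_nonneg_of_nonpos_of_nonpos (sub_nonpos.2 (hf _ _ hz))
      (sub_nonpos.2 (hg _ _ (norm_perpBisectorReflection_le_norm hxy hz)))

variable [FiniteDimensional ℝ E] [MeasurableSpace E] [BorelSpace E]

theorem integral_mul_sub_comp_perpBisectorReflection (hf : ∀ u v : E, ‖u‖ ≤ ‖v‖ → f v ≤ f u)
    (hint : ∀ a, Integrable (fun z => f (a - z) * g z)) (x y : E) :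
    ∫ z, (f (x - z) - f (y - z)) * (g z - g (perpBisectorReflection x y z)) =
      2 * ((∫ z, f (x - z) * g z) - ∫ z, f (y - z) * g z) := by
  have hDg : Integrable (fun z => (f (x - z) - f (y - z)) * g z) := by
    simp only [sub_mul]
    exact (hint x).sub (hint y)
  rw [integral_mul_sub_comp_of_comp_eq_neg (measurePreserving_perpBisectorReflection x y)
    (perpBisectorReflection x y).toHomeomorph.measurableEmbedding
    (sub_comp_perpBisectorReflection hf x y) hDg]
  simp only [sub_mul]
  rw [integral_sub (hint x) (hint y)]

theorem integrable_mul_sub_comp_perpBisectorReflection (hf : ∀ u v : E, ‖u‖ ≤ ‖v‖ → f v ≤ f u)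
    (hint : ∀ a, Integrable (fun z => f (a - z) * g z)) (x y : E) :
    Integrable (fun z => (f (x - z) - f (y - z)) * (g z - g (perpBisectorReflection x y z))) := by
  have hDg : Integrable (fun z => (f (x - z) - f (y - z)) * g z) := by
    simp only [sub_mul]
    exact (hint x).sub (hint y)
  simp only [mul_sub]
  exact hDg.sub (integrable_mul_comp_of_comp_eq_neg
    (measurePreserving_perpBisectorReflection x y)
    (perpBisectorReflection x y).toHomeomorph.measurableEmbedding
    (sub_comp_perpBisectorReflection hf x y) hDg)

theorem integral_comp_sub_mul_le (hf0 : ∀ z, 0 ≤ f z) (hfint : Integrable f)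
    (hgint : Integrable g) (hf : ∀ u v : E, ‖u‖ ≤ ‖v‖ → f v ≤ f u)
    (hg : ∀ u v : E, ‖u‖ ≤ ‖v‖ → g v ≤ g u) {x y : E} (hxy : ‖x‖ ≤ ‖y‖) :
    ∫ z, f (y - z) * g z ≤ ∫ z, f (x - z) * g z := by
  have hint := integrable_comp_sub_mul hfint.1 (norm_le_apply_zero_of_antitone hf0 hf) hgint
  have h : 0 ≤ ∫ z, (f (x - z) - f (y - z)) * (g z - g (perpBisectorReflection x y z)) :=
    integral_nonneg fun z => mul_sub_comp_perpBisectorReflection_nonneg hf hg hxy z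
  rw [integral_mul_sub_comp_perpBisectorReflection hf hint] at h
  linarith

theorem integral_comp_sub_mul_lt (hfpos : ∀ z, 0 < f z) (hfint : Integrable f)
    (hgint : Integrable g) (hf : ∀ u v : E, ‖u‖ ≤ ‖v‖ → f v ≤ f u)
    (hg : ∀ u v : E, ‖u‖ ≤ ‖v‖ → g v ≤ g u) (hg_strict : ∀ u v : E, ‖u‖ < ‖v‖ → g v < g u)
    {x y : E} (hxy : ‖x‖ < ‖y‖) :
    ∫ z, f (y - z) * g z < ∫ z, f (x - z) * g z := by
  have hne : x ≠ y := ne_of_apply_ne norm hxy.ne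
  have : Nontrivial E := nontrivial_of_ne x y hne
  have hn : 0 < ‖y - x‖ := norm_pos_iff.2 (sub_ne_zero.2 hne.symm)
  have hint := integrable_comp_sub_mul hfint.1
    (norm_le_apply_zero_of_antitone (fun z => (hfpos z).le) hf) hgint
  obtain ⟨a, ha, hdrop⟩ := hfint.exists_lt_across_annulus hfpos hf (half_pos hn)
  set S : Set E := {z | ‖x - z‖ < a ∧ a + ‖y - x‖ / 2 < ‖y - z‖}
  have hS_open : IsOpen S :=
    (isOpen_lt (continuous_const.sub continuous_id).norm continuous_const).inter
      (isOpen_lt continuous_const (continuous_const.sub continuous_id).norm)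
  obtain ⟨z₀, hz₀x, hz₀y⟩ :=
    exists_norm_sub_eq_and_norm_sub_eq_add hne (r := a - ‖y - x‖ / 4) (by linarith)
  have hz₀ : z₀ ∈ S := ⟨by linarith, by linarith⟩
  have hpos : ∀ z ∈ S,
      0 < (f (x - z) - f (y - z)) * (g z - g (perpBisectorReflection x y z)) := by
    rintro z ⟨hzx, hzy⟩
    have hz : ‖x - z‖ < ‖y - z‖ := by linarith
    exact mul_pos (sub_pos.2 (hdrop _ _ hzx.le (by linarith)))
      (sub_pos.2 (hg_strict _ _ (norm_lt_norm_perpBisectorReflection hxy hz)))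
  have h := (integral_pos_iff_support_of_nonneg
    (mul_sub_comp_perpBisectorReflection_nonneg hf hg hxy.le)
    (integrable_mul_sub_comp_perpBisectorReflection hf hint x y)).2
    ((hS_open.measure_pos volume ⟨z₀, hz₀⟩).trans_le
      (measure_mono fun z hz => (hpos z hz).ne'))
  rw [integral_mul_sub_comp_perpBisectorReflection hf hint] at h
  linarith

end Convolution

theorem conv_of_radial_decreasing_general
    (f g : EuclideanSpace ℝ (Fin 3) → ℝ)
    (hf0 : ∀ x, 0 ≤ f x)
    (hfint : Integrable f) (hgint : Integrable g)
    (hfdec : ∀ x y : EuclideanSpace ℝ (Fin 3), ‖x‖ ≤ ‖y‖ → f y ≤ f x)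
    (hgdec : ∀ x y : EuclideanSpace ℝ (Fin 3), ‖x‖ ≤ ‖y‖ → g y ≤ g x) :
    ((∀ x y : EuclideanSpace ℝ (Fin 3), ‖x‖ = ‖y‖ →
        (∫ z, f (x - z) * g z) = ∫ z, f (y - z) * g z) ∧
      (∀ x y : EuclideanSpace ℝ (Fin 3), ‖x‖ ≤ ‖y‖ →
        (∫ z, f (y - z) * g z) ≤ ∫ z, f (x - z) * g z)) ∧
    ((∀ x, 0 < f x) → (∀ x y : EuclideanSpace ℝ (Fin 3), ‖x‖ < ‖y‖ → g y < g x) →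
      ∀ x y : EuclideanSpace ℝ (Fin 3), ‖x‖ < ‖y‖ →
        (∫ z, f (y - z) * g z) < ∫ z, f (x - z) * g z) := by
  have hle (x y : EuclideanSpace ℝ (Fin 3)) (hxy : ‖x‖ ≤ ‖y‖) :=
    integral_comp_sub_mul_le hf0 hfint hgint hfdec hgdec hxy
  refine ⟨⟨fun x y hxy => le_antisymm (hle y x hxy.ge) (hle x y hxy.le), hle⟩, ?_⟩
  exact fun hfpos hgstrict x y hxy =>
    integral_comp_sub_mul_lt hfpos hfint hgint hfdec hgdec hgstrict hxy

/-- Convolution of radial non-increasing functions: the convolution is radial and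
non-increasing; if moreover `f > 0` and `g` is strictly decreasing, it is strictly
decreasing. -/
theorem conv_of_radial_decreasing
    (f g : EuclideanSpace ℝ (Fin 3) → ℝ)
    (hf0 : ∀ x, 0 ≤ f x) (hg0 : ∀ x, 0 ≤ g x)
    (hfint : Integrable f) (hgint : Integrable g)
    (hfrad : ∀ x y : EuclideanSpace ℝ (Fin 3), ‖x‖ = ‖y‖ → f x = f y)
    (hgrad : ∀ x y : EuclideanSpace ℝ (Fin 3), ‖x‖ = ‖y‖ → g x = g y)
    (hfdec : ∀ x y : EuclideanSpace ℝ (Fin 3), ‖x‖ ≤ ‖y‖ → f y ≤ f x)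
    (hgdec : ∀ x y : EuclideanSpace ℝ (Fin 3), ‖x‖ ≤ ‖y‖ → g y ≤ g x)
    (hstrict : (∀ x y : EuclideanSpace ℝ (Fin 3), ‖x‖ < ‖y‖ → f y < f x)
      ∨ (∀ x y : EuclideanSpace ℝ (Fin 3), ‖x‖ < ‖y‖ → g y < g x)) :
    ((∀ x y : EuclideanSpace ℝ (Fin 3), ‖x‖ = ‖y‖ →
        (∫ z, f (x - z) * g z) = ∫ z, f (y - z) * g z) ∧
      (∀ x y : EuclideanSpace ℝ (Fin 3), ‖x‖ ≤ ‖y‖ →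
        (∫ z, f (y - z) * g z) ≤ ∫ z, f (x - z) * g z)) ∧
    ((∀ x, 0 < f x) → (∀ x y : EuclideanSpace ℝ (Fin 3), ‖x‖ < ‖y‖ → g y < g x) →
      ∀ x y : EuclideanSpace ℝ (Fin 3), ‖x‖ < ‖y‖ →
        (∫ z, f (y - z) * g z) < ∫ z, f (x - z) * g z) :=
  conv_of_radial_decreasing_general f g hf0 hfint hgint hfdec hgdec
end
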